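/- arXiv:2102.02990 — 3 statements merged into one kernel-verified Lean document; each statement's English description precedes it below -/
import Mathlib

section
/- For every star expression e over an action set A, the projection function π restricts to a functional bisimulation from the induced chart of the 1-chart interpretation C1(e) to the chart interpretation C(e); in particular ind(C1(e)) and C(e) are bisimilar. -/
universe u v w

/-- Star expressions over a set `A` of actions. -/
inductive StExp (A : Type u) : Type u
  | zero : StExp A
  | one : StExp A
  | act : A → StExp A
  | add : StExp A → StExp A → StExp A
  | mul : StExp A → StExp A → StExp A
  | star : StExp A → StExp A

namespace StExp

variable {A : Type u}

/-- Immediate termination in Milner's TSS `T(A)`. -/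
inductive Term : StExp A → Prop
  | one : Term StExp.one
  | addL {e₁ e₂ : StExp A} : Term e₁ → Term (StExp.add e₁ e₂)
  | addR {e₁ e₂ : StExp A} : Term e₂ → Term (StExp.add e₁ e₂)
  | mul {e₁ e₂ : StExp A} : Term e₁ → Term e₂ → Term (StExp.mul e₁ e₂)
  | star {e : StExp A} : Term (StExp.star e)

/-- Transitions in Milner's TSS `T(A)`. -/
inductive Step : StExp A → A → StExp A → Prop
  | act {a : A} : Step (StExp.act a) a StExp.one
  | addL {e₁ e₂ e' : StExp A} {a : A} : Step e₁ a e' → Step (StExp.add e₁ e₂) a e'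
  | addR {e₁ e₂ e' : StExp A} {a : A} : Step e₂ a e' → Step (StExp.add e₁ e₂) a e'
  | mulL {e₁ e₂ e₁' : StExp A} {a : A} :
      Step e₁ a e₁' → Step (StExp.mul e₁ e₂) a (StExp.mul e₁' e₂)
  | mulR {e₁ e₂ e₂' : StExp A} {a : A} :
      Term e₁ → Step e₂ a e₂' → Step (StExp.mul e₁ e₂) a e₂'
  | star {e e' : StExp A} {a : A} :
      Step e a e' → Step (StExp.star e) a (StExp.mul e' (StExp.star e))

/-- (Syntactic) star height. -/
def height : StExp A → ℕ
  | .zero => 0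
  | .one => 0
  | .act _ => 0
  | .add e₁ e₂ => max e₁.height e₂.height
  | .mul e₁ e₂ => max e₁.height e₂.height
  | .star e => e.height + 1

end StExp

/-- Stacked star expressions: `E ::= e | E·e | E * e*`. -/
inductive SExp (A : Type u) : Type u
  | up : StExp A → SExp A
  | pr : SExp A → StExp A → SExp A
  | st : SExp A → StExp A → SExp A

namespace SExp

variable {A : Type u}

/-- Projection to star expressions, interpreting `*` as `·`. -/
def proj : SExp A → StExp A
  | .up e => e
  | .pr E e => StExp.mul E.proj e
  | .st E e => StExp.mul E.proj (StExp.star e)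

/-- `E` is a star expression (contains no stacked product `*`). -/
def IsStExp : SExp A → Prop
  | .up _ => True
  | .pr E _ => IsStExp E
  | .st _ _ => False

/-- Star expressions that are not products (canonical arguments of `up`). -/
def UpOk : StExp A → Prop
  | .mul _ _ => False
  | _ => True

/-- Canonical stacked star expressions: products of star expressions are
represented by `pr` rather than by `up` applied to `StExp.mul`. -/
def Canonical : SExp A → Prop
  | .up e => UpOk e
  | .pr E _ => Canonical E
  | .st E _ => Canonical E

/-- Canonical embedding of star expressions into stacked star expressions. -/
def flatUp : StExp A → SExp A
  | .mul e₁ e₂ => SExp.pr (flatUp e₁) e₂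
  | e => SExp.up e

/-- Immediate termination for stacked star expressions (TSS `T̲^(*)(A)`). -/
inductive STerm : SExp A → Prop
  | up {e : StExp A} : StExp.Term e → STerm (SExp.up e)
  | pr {E : SExp A} {e : StExp A} : STerm E → StExp.Term e → STerm (SExp.pr E e)

/-- Transitions of the TSS `T̲^(*)(A)`; labels in `Option A`, where `none`
is the empty-step label `1`. -/
inductive SStep : SExp A → Option A → SExp A → Prop
  | act {a : A} : SStep (SExp.up (StExp.act a)) (some a) (SExp.up StExp.one)
  | addL {e₁ e₂ : StExp A} {a : A} {E' : SExp A} :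
      SStep (SExp.up e₁) (some a) E' → SStep (SExp.up (StExp.add e₁ e₂)) (some a) E'
  | addR {e₁ e₂ : StExp A} {a : A} {E' : SExp A} :
      SStep (SExp.up e₂) (some a) E' → SStep (SExp.up (StExp.add e₁ e₂)) (some a) E'
  | upMulL {e₁ e₂ : StExp A} {l : Option A} {E₁' : SExp A} :
      SStep (SExp.up e₁) l E₁' → SStep (SExp.up (StExp.mul e₁ e₂)) l (SExp.pr E₁' e₂)
  | upMulR {e₁ e₂ : StExp A} {a : A} {E₂' : SExp A} :
      StExp.Term e₁ → SStep (SExp.up e₂) (some a) E₂' →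
      SStep (SExp.up (StExp.mul e₁ e₂)) (some a) E₂'
  | upStar {e : StExp A} {a : A} {E' : SExp A} :
      SStep (SExp.up e) (some a) E' →
      SStep (SExp.up (StExp.star e)) (some a) (SExp.st E' e)
  | prL {E₁ E₁' : SExp A} {e₂ : StExp A} {l : Option A} :
      SStep E₁ l E₁' → SStep (SExp.pr E₁ e₂) l (SExp.pr E₁' e₂)
  | prR {E₁ E₂' : SExp A} {e₂ : StExp A} {a : A} :
      STerm E₁ → SStep (SExp.up e₂) (some a) E₂' → SStep (SExp.pr E₁ e₂) (some a) E₂'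
  | stL {E₁ E₁' : SExp A} {e₂ : StExp A} {l : Option A} :
      SStep E₁ l E₁' → SStep (SExp.st E₁ e₂) l (SExp.st E₁' e₂)
  | stOne {E₁ : SExp A} {e₂ : StExp A} :
      STerm E₁ → SStep (SExp.st E₁ e₂) none (SExp.up (StExp.star e₂))

/-- `1`-transition. -/
def OneStep (E F : SExp A) : Prop := SStep E none F

/-- Transition with an arbitrary label in `A ∪ {1}`. -/
def AStep (E F : SExp A) : Prop := ∃ l, SStep E l F

/-- Induced (proper) transition `E ⇒a E'`: a sequence of `1`-transitions
followed by an `a`-transition. -/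
def IStep (E : SExp A) (a : A) (E' : SExp A) : Prop :=
  ∃ F, Relation.ReflTransGen OneStep E F ∧ SStep F (some a) E'

/-- Induced termination `E ↓(1)`: a sequence of `1`-transitions ending in a
terminating expression. -/
def ITerm (E : SExp A) : Prop :=
  ∃ F, Relation.ReflTransGen OneStep E F ∧ STerm F

/-- `E` is normed: a path to an expression with immediate termination. -/
def Normed (E : SExp A) : Prop :=
  ∃ F, Relation.ReflTransGen AStep E F ∧ STerm F

/-- `E` is normed⁺: a nonempty sequence of induced transitions to an
expression with induced termination. -/
def NormedP (E : SExp A) : Prop :=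
  ∃ F, Relation.TransGen (fun X Y => ∃ a : A, IStep X a Y) E F ∧ ITerm F

/-- Induced termination as derived in the extension `T̲ind^(*)(A)`. -/
inductive IndTerm : SExp A → Prop
  | base {E : SExp A} : STerm E → IndTerm E
  | step {E F : SExp A} : SStep E none F → IndTerm F → IndTerm E

/-- Induced transitions as derived in the extension `T̲ind^(*)(A)`. -/
inductive IndStep : SExp A → A → SExp A → Prop
  | base {E E' : SExp A} {a : A} : SStep E (some a) E' → IndStep E a E'
  | step {E F E' : SExp A} {a : A} : SStep E none F → IndStep F a E' → IndStep E a E'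

/-- Marked transitions of the TSS `T̲̂^(*)(A)`: marking label `0` means a body
(`bo`) transition, `n ≥ 1` a loop-entry transition of level `n`. -/
inductive MStep : SExp A → Option A × ℕ → SExp A → Prop
  | act {a : A} : MStep (SExp.up (StExp.act a)) (some a, 0) (SExp.up StExp.one)
  | addL {e₁ e₂ : StExp A} {a : A} {n : ℕ} {E' : SExp A} :
      MStep (SExp.up e₁) (some a, n) E' → MStep (SExp.up (StExp.add e₁ e₂)) (some a, 0) E'
  | addR {e₁ e₂ : StExp A} {a : A} {n : ℕ} {E' : SExp A} :
      MStep (SExp.up e₂) (some a, n) E' → MStep (SExp.up (StExp.add e₁ e₂)) (some a, 0) E'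
  | upMulL {e₁ e₂ : StExp A} {l : Option A × ℕ} {E₁' : SExp A} :
      MStep (SExp.up e₁) l E₁' → MStep (SExp.up (StExp.mul e₁ e₂)) l (SExp.pr E₁' e₂)
  | upMulR {e₁ e₂ : StExp A} {a : A} {n : ℕ} {E₂' : SExp A} :
      StExp.Term e₁ → MStep (SExp.up e₂) (some a, n) E₂' →
      MStep (SExp.up (StExp.mul e₁ e₂)) (some a, 0) E₂'
  | upStarP {e : StExp A} {a : A} {n : ℕ} {E' : SExp A} :
      NormedP (SExp.up e) → MStep (SExp.up e) (some a, n) E' →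
      MStep (SExp.up (StExp.star e)) (some a, e.height + 1) (SExp.st E' e)
  | upStarN {e : StExp A} {a : A} {n : ℕ} {E' : SExp A} :
      ¬ NormedP (SExp.up e) → MStep (SExp.up e) (some a, n) E' →
      MStep (SExp.up (StExp.star e)) (some a, 0) (SExp.st E' e)
  | prL {E₁ E₁' : SExp A} {e₂ : StExp A} {l : Option A × ℕ} :
      MStep E₁ l E₁' → MStep (SExp.pr E₁ e₂) l (SExp.pr E₁' e₂)
  | prR {E₁ E₂' : SExp A} {e₂ : StExp A} {a : A} {n : ℕ} :
      STerm E₁ → MStep (SExp.up e₂) (some a, n) E₂' →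
      MStep (SExp.pr E₁ e₂) (some a, 0) E₂'
  | stL {E₁ E₁' : SExp A} {e₂ : StExp A} {l : Option A × ℕ} :
      MStep E₁ l E₁' → MStep (SExp.st E₁ e₂) l (SExp.st E₁' e₂)
  | stOne {E₁ : SExp A} {e₂ : StExp A} :
      STerm E₁ → MStep (SExp.st E₁ e₂) (none, 0) (SExp.up (StExp.star e₂))

/-- Body transition `→bo`. -/
def BStep (E F : SExp A) : Prop := ∃ l : Option A, MStep E (l, 0) F

/-- Star height of stacked star expressions. -/
def heightS : SExp A → ℕ
  | .up e => e.height
  | .pr E e => max E.heightS e.height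
  | .st E e => max E.heightS (e.height + 1)

end SExp

/-- Applicative contexts of stacked star expressions. -/
inductive AppCtx (A : Type u) : Type u
  | hole : AppCtx A
  | pr : AppCtx A → StExp A → AppCtx A
  | st : AppCtx A → StExp A → AppCtx A

/-- Filling the hole of an applicative context. -/
def AppCtx.fill {A : Type u} : AppCtx A → SExp A → SExp A
  | .hole, E => E
  | .pr C e, E => SExp.pr (C.fill E) e
  | .st C e, E => SExp.st (C.fill E) e

/-- A labeled transition system with termination. -/
structure LTS (S : Type u) (L : Type v) where
  step : S → L → S → Prop
  term : S → Prop

/-- Bisimulation between two LTSs with termination. -/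
def IsBisimulation {S₁ : Type u} {S₂ : Type v} {L : Type w}
    (M₁ : LTS S₁ L) (M₂ : LTS S₂ L) (B : S₁ → S₂ → Prop) : Prop :=
  (∃ s₁ s₂, B s₁ s₂) ∧
  ∀ s₁ s₂, B s₁ s₂ →
    ((∀ a s₁', M₁.step s₁ a s₁' → ∃ s₂', M₂.step s₂ a s₂' ∧ B s₁' s₂') ∧
     (∀ a s₂', M₂.step s₂ a s₂' → ∃ s₁', M₁.step s₁ a s₁' ∧ B s₁' s₂') ∧
     (M₁.term s₁ ↔ M₂.term s₂))

/-- The star expressions LTS `L(StExp(A))`. -/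
def stexpLTS (A : Type u) : LTS (StExp A) A := ⟨StExp.Step, StExp.Term⟩

/-- The induced LTS of the stacked star expressions 1-LTS `L1(StExp^(*)(A))`. -/
def indSExpLTS (A : Type u) : LTS (SExp A) A := ⟨SExp.IStep, SExp.ITerm⟩

/-- A (rooted) chart. -/
structure Chart (V : Type u) (L : Type v) where
  verts : Set V
  start : V
  step : V → L → V → Prop
  term : V → Prop

/-- Bisimulation between two charts: a bisimulation between the underlying
LTSs that relates the start vertices. -/
def IsChartBisim {V₁ : Type u} {V₂ : Type v} {L : Type w}
    (C₁ : Chart V₁ L) (C₂ : Chart V₂ L) (B : V₁ → V₂ → Prop) : Prop :=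
  (∀ x y, B x y → x ∈ C₁.verts ∧ y ∈ C₂.verts) ∧
  B C₁.start C₂.start ∧
  ∀ x y, B x y →
    ((∀ a x', C₁.step x a x' → ∃ y', C₂.step y a y' ∧ B x' y') ∧
     (∀ a y', C₂.step y a y' → ∃ x', C₁.step x a x' ∧ B x' y') ∧
     (C₁.term x ↔ C₂.term y))

def ChartBisimilar {V₁ : Type u} {V₂ : Type v} {L : Type w}
    (C₁ : Chart V₁ L) (C₂ : Chart V₂ L) : Prop :=
  ∃ B, IsChartBisim C₁ C₂ B

/-- Star expressions reachable from `e` in Milner's LTS. -/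
def MReach {A : Type u} (e : StExp A) : Set (StExp A) :=
  {f | Relation.ReflTransGen (fun x y => ∃ a, StExp.Step x a y) e f}

/-- The chart interpretation `C(e)` of a star expression. -/
def chartInt {A : Type u} (e : StExp A) : Chart (StExp A) A where
  verts := MReach e
  start := e
  step x a y := x ∈ MReach e ∧ StExp.Step x a y
  term x := x ∈ MReach e ∧ StExp.Term x

/-- Stacked star expressions reachable from (the canonical representation of)
`e` in the 1-LTS. -/
def SReach {A : Type u} (e : StExp A) : Set (SExp A) :=
  {F | Relation.ReflTransGen SExp.AStep (SExp.flatUp e) F}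

/-- The 1-chart interpretation `C1(e)` of a star expression. -/
def oneChartInt {A : Type u} (e : StExp A) : Chart (SExp A) (Option A) where
  verts := SReach e
  start := SExp.flatUp e
  step x l y := x ∈ SReach e ∧ SExp.SStep x l y
  term x := x ∈ SReach e ∧ SExp.STerm x

/-- The entry/body-labeled 1-chart interpretation `Ĉ1(e)`. -/
def markedOneChartInt {A : Type u} (e : StExp A) : Chart (SExp A) (Option A × ℕ) where
  verts := SReach e
  start := SExp.flatUp e
  step x l y := x ∈ SReach e ∧ SExp.MStep x l y
  term x := x ∈ SReach e ∧ SExp.STerm x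

/-- The induced chart of a 1-chart: induced transitions and induced
termination. -/
def indChart {V : Type u} {A : Type v} (C : Chart V (Option A)) : Chart V A where
  verts := C.verts
  start := C.start
  step x a y := ∃ u, Relation.ReflTransGen (fun s t => C.step s none t) x u ∧ C.step u (some a) y
  term x := ∃ u, Relation.ReflTransGen (fun s t => C.step s none t) x u ∧ C.term u

/-- An infinite path from the start vertex of a chart. -/
def IsInfPathFrom {V : Type u} {L : Type v} (C : Chart V L) (p : ℕ → V) : Prop :=
  p 0 = C.start ∧ ∀ i, ∃ l, C.step (p i) l (p (i + 1))

/-- Loop chart: (L1) an infinite path from the start vertex exists, (L2) every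
infinite path from the start vertex returns to it after a positive number of
transitions, (L3) only the start vertex may terminate. -/
def IsLoopChart {V : Type u} {L : Type v} (C : Chart V L) : Prop :=
  (∃ p, IsInfPathFrom C p) ∧
  (∀ p, IsInfPathFrom C p → ∃ k, 0 < k ∧ p k = C.start) ∧
  (∀ w ∈ C.verts, C.term w → w = C.start)

namespace LLEE

variable {S : Type u} {L : Type v}

/-- Body transition of an entry/body-labeling. -/
def Body (step : S → L × ℕ → S → Prop) (x y : S) : Prop := ∃ l, step x (l, 0) y

/-- Entry transition of level `n` of an entry/body-labeling. -/
def Entry (step : S → L × ℕ → S → Prop) (n : ℕ) (x y : S) : Prop := ∃ l, step x (l, n) y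

/-- Vertices of the induced subchart at `(v, n)`: on paths that start with an
`→[n]` transition from `v`, continue with body transitions, and halt upon
revisiting `v`. -/
def loopVerts (step : S → L × ℕ → S → Prop) (v : S) (n : ℕ) : Set S :=
  insert v {w | ∃ u, Entry step n v u ∧
    Relation.ReflTransGen (fun x y => Body step x y ∧ x ≠ v) u w}

/-- The induced subchart at `(v, n)`. -/
def subchartAt (step : S → L × ℕ → S → Prop) (term : S → Prop) (v : S) (n : ℕ) :
    Chart S (L × ℕ) where
  verts := loopVerts step v n
  start := v
  step x l y :=
    (x = v ∧ l.2 = n ∧ step x l y) ∨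
    (x ∈ loopVerts step v n ∧ x ≠ v ∧ l.2 = 0 ∧ step x l y)
  term x := x ∈ loopVerts step v n ∧ term x

/-- LLEE-witness conditions (W1)–(W3) for an entry/body-labeled transition
system with transitions `step` and termination `term`. -/
def IsWitness (step : S → L × ℕ → S → Prop) (term : S → Prop) : Prop :=
  (¬ ∃ p : ℕ → S, ∀ i, Body step (p i) (p (i + 1))) ∧
  (∀ v n, 0 < n → (∃ w, Entry step n v w) → IsLoopChart (subchartAt step term v n)) ∧
  (∀ v n, 0 < n → (∃ w, Entry step n v w) →
    ∀ t, t ∈ loopVerts step v n → t ≠ v → ∀ m t', 0 < m → Entry step m t t' → m < n)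

end LLEE

namespace LEE

variable {V : Type u} {L : Type v}

/-- Vertices of the subchart generated from `v` by a set `U` of transitions
from `v`: paths start with a transition in `U` and continue (with arbitrary
transitions) until `v` is reached again. -/
def genVerts (C : Chart V L) (v : V) (U : Set (V × L × V)) : Set V :=
  insert v {w | ∃ u, (∃ l, (v, l, u) ∈ U) ∧
    Relation.ReflTransGen (fun x y => (∃ l, C.step x l y) ∧ x ≠ v) u w}

/-- The subchart generated from `v` by the transitions in `U`. -/
def genSubchart (C : Chart V L) (v : V) (U : Set (V × L × V)) : Chart V L where
  verts := genVerts C v U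
  start := v
  step x l y :=
    (x = v ∧ (v, l, y) ∈ U) ∨
    (x ∈ genVerts C v U ∧ x ≠ v ∧ C.step x l y)
  term x := x ∈ genVerts C v U ∧ C.term x

/-- `U` determines a loop subchart of `C` rooted at `v`. -/
def IsLoopSubchart (C : Chart V L) (v : V) (U : Set (V × L × V)) : Prop :=
  v ∈ C.verts ∧ U.Nonempty ∧
  (∀ t ∈ U, t.1 = v ∧ C.step t.1 t.2.1 t.2.2) ∧
  IsLoopChart (genSubchart C v U)

/-- Elimination of the loop-entry transitions in `U`, followed by removal of
all vertices and transitions that become unreachable. -/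
def elim (C : Chart V L) (U : Set (V × L × V)) : Chart V L :=
  let step' : V → L → V → Prop := fun x l y => C.step x l y ∧ (x, l, y) ∉ U
  let R : Set V := {w | Relation.ReflTransGen (fun x y => ∃ l, step' x l y) C.start w}
  { verts := C.verts ∩ R
    start := C.start
    step := fun x l y => step' x l y ∧ x ∈ R ∧ y ∈ R
    term := fun x => C.term x ∧ x ∈ R }

/-- One step of the loop elimination procedure. -/
def ElimStep (C C' : Chart V L) : Prop :=
  ∃ v U, IsLoopSubchart C v U ∧ C' = elim C U

/-- The chart has an infinite path. -/
def HasInfPath (C : Chart V L) : Prop :=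
  ∃ p : ℕ → V, p 0 ∈ C.verts ∧ ∀ i, ∃ l, C.step (p i) l (p (i + 1))

/-- The loop existence and elimination property LEE: repeated elimination of
loop subcharts results in a chart without an infinite path. -/
def SatisfiesLEE (C : Chart V L) : Prop :=
  ∃ C', Relation.ReflTransGen ElimStep C C' ∧ ¬ HasInfPath C'

end LEE

/-- A maximal path of body transitions from `X` in the entry/body-labeled
1-LTS: finite (of length `len`) or infinite (`len = ⊤`), and if finite then
not extensible by any further body transition. -/
structure BoPath (A : Type u) (X : SExp A) where
  len : ℕ∞
  f : ℕ → SExp A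
  head : f 0 = X
  steps : ∀ i : ℕ, (i : ℕ∞) < len → SExp.BStep (f i) (f (i + 1))
  maximal : ∀ n : ℕ, len = (n : ℕ∞) → ∀ Y, ¬ SExp.BStep (f n) Y

/-- Canonical stacked star expressions (the states of the stacked star
expressions 1-LTS `L1(StExp^(*)(A))`). -/
def CSExp (A : Type u) : Type u := {E : SExp A // SExp.Canonical E}

/-!
The projection `π` only forgets how a product is stacked, so a proper transition `E →a E'`
projects to `π E →a π E'`. A `1`-transition discards a terminated left factor `E₁` of a
stacked product `E₁ * e*`, turning `π E = π E₁ · e*` into `e*`; as `π E₁` terminates, every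
transition and the termination of `e*` are already those of `π E`. Hence induced transitions
and induced termination of `E` project to transitions and termination of `π E`. Conversely, a
transition or termination of `π E` that uses terminated left factors is recovered by first
firing the `1`-transitions that discard the corresponding stacked factors.
-/

open Relation

namespace StExp

variable {A : Type u}

def OutgoingLE (f g : StExp A) : Prop :=
  (∀ a h, Step f a h → Step g a h) ∧ (Term f → Term g)

namespace OutgoingLE

theorem refl (f : StExp A) : OutgoingLE f f := ⟨fun _ _ s => s, id⟩

theorem trans {f g h : StExp A} (hfg : OutgoingLE f g) (hgh : OutgoingLE g h) :
    OutgoingLE f h :=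
  ⟨fun a k s => hgh.1 a k (hfg.1 a k s), hgh.2 ∘ hfg.2⟩

theorem mul_right {f g : StExp A} (hfg : OutgoingLE f g) (k : StExp A) :
    OutgoingLE (mul f k) (mul g k) := by
  refine ⟨fun a h s => ?_, fun t => ?_⟩
  · cases s with
    | mulL s => exact .mulL (hfg.1 _ _ s)
    | mulR t s => exact .mulR (hfg.2 t) s
  · cases t with
    | mul t₁ t₂ => exact .mul (hfg.2 t₁) t₂

theorem mul_of_term {f : StExp A} (hf : Term f) (k : StExp A) : OutgoingLE k (mul f k) :=
  ⟨fun _ _ s => .mulR hf s, .mul hf⟩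

end OutgoingLE

end StExp

namespace SExp

open StExp

variable {A : Type u}

theorem proj_flatUp (e : StExp A) : (flatUp e).proj = e := by
  induction e with
  | mul e₁ e₂ ih₁ => simp [flatUp, proj, ih₁]
  | _ => rfl

theorem STerm.term_proj {E : SExp A} (h : STerm E) : Term E.proj := by
  induction h with
  | up h => exact h
  | pr _ h ih => exact .mul ih h

theorem SStep.step_proj {E E' : SExp A} {a : A} (h : SStep E (some a) E') :
    Step E.proj a E'.proj := by
  generalize hl : some a = l at h
  induction h generalizing a with
  | act => cases hl; exact .act
  | addL _ ih => cases hl; exact .addL (ih rfl)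
  | addR _ ih => cases hl; exact .addR (ih rfl)
  | upMulL _ ih => exact .mulL (ih hl)
  | upMulR ht _ ih => cases hl; exact .mulR ht (ih rfl)
  | upStar _ ih => cases hl; exact .star (ih rfl)
  | prL _ ih => exact .mulL (ih hl)
  | prR ht _ ih => cases hl; exact .mulR ht.term_proj (ih rfl)
  | stL _ ih => exact .mulL (ih hl)
  | stOne => cases hl

theorem SStep.outgoingLE_proj {E E' : SExp A} (h : SStep E none E') :
    OutgoingLE E'.proj E.proj := by
  generalize hl : (none : Option A) = l at h
  induction h with
  | upMulL _ ih | prL _ ih | stL _ ih => exact (ih hl).mul_right _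
  | stOne ht => exact .mul_of_term ht.term_proj _
  | _ => cases hl

theorem outgoingLE_proj_of_oneSteps {E F : SExp A} (h : ReflTransGen OneStep E F) :
    OutgoingLE F.proj E.proj := by
  induction h with
  | refl => exact .refl _
  | tail _ s ih => exact (SStep.outgoingLE_proj s).trans ih

theorem IStep.step_proj {E E' : SExp A} {a : A} (h : IStep E a E') :
    Step E.proj a E'.proj := by
  obtain ⟨F, hEF, s⟩ := h
  exact (outgoingLE_proj_of_oneSteps hEF).1 a _ s.step_proj

theorem ITerm.term_proj {E : SExp A} (h : ITerm E) : Term E.proj := by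
  obtain ⟨F, hEF, t⟩ := h
  exact (outgoingLE_proj_of_oneSteps hEF).2 t.term_proj

theorem exists_sStep_up_of_step {e g : StExp A} {a : A} (h : Step e a g) :
    ∃ E', SStep (up e) (some a) E' ∧ E'.proj = g := by
  induction h with
  | act => exact ⟨up .one, .act, rfl⟩
  | addL _ ih =>
      obtain ⟨E', s, rfl⟩ := ih
      exact ⟨E', .addL s, rfl⟩
  | addR _ ih =>
      obtain ⟨E', s, rfl⟩ := ih
      exact ⟨E', .addR s, rfl⟩
  | mulL _ ih =>
      obtain ⟨E', s, rfl⟩ := ih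
      exact ⟨pr E' _, .upMulL s, rfl⟩
  | mulR ht _ ih =>
      obtain ⟨E', s, rfl⟩ := ih
      exact ⟨E', .upMulR ht s, rfl⟩
  | star _ ih =>
      obtain ⟨E', s, rfl⟩ := ih
      exact ⟨st E' _, .upStar s, rfl⟩

theorem oneSteps_pr {E F : SExp A} (h : ReflTransGen OneStep E F) (e : StExp A) :
    ReflTransGen OneStep (pr E e) (pr F e) :=
  h.lift (pr · e) fun _ _ => SStep.prL

theorem oneSteps_st {E F : SExp A} (h : ReflTransGen OneStep E F) (e : StExp A) :
    ReflTransGen OneStep (st E e) (st F e) :=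
  h.lift (st · e) fun _ _ => SStep.stL

theorem iTerm_of_term_proj {E : SExp A} (h : Term E.proj) : ITerm E := by
  induction E with
  | up e => exact ⟨up e, .refl, .up h⟩
  | pr E e ih =>
      cases h with
      | mul hE he =>
          obtain ⟨F, hEF, t⟩ := ih hE
          exact ⟨pr F e, oneSteps_pr hEF e, .pr t he⟩
  | st E e ih =>
      cases h with
      | mul hE _ =>
          obtain ⟨F, hEF, t⟩ := ih hE
          exact ⟨up (.star e), (oneSteps_st hEF e).tail (.stOne t), .up .star⟩

theorem exists_iStep_of_step_proj {E : SExp A} {a : A} {g : StExp A}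
    (h : Step E.proj a g) : ∃ E', IStep E a E' ∧ E'.proj = g := by
  induction E generalizing g with
  | up e =>
      obtain ⟨E', s, hE'⟩ := exists_sStep_up_of_step h
      exact ⟨E', ⟨up e, .refl, s⟩, hE'⟩
  | pr E e ih =>
      cases h with
      | mulL h =>
          obtain ⟨E', ⟨F, hEF, s⟩, rfl⟩ := ih h
          exact ⟨pr E' e, ⟨pr F e, oneSteps_pr hEF e, .prL s⟩, rfl⟩
      | mulR ht h =>
          obtain ⟨F, hEF, t⟩ := iTerm_of_term_proj ht
          obtain ⟨E', s, hE'⟩ := exists_sStep_up_of_step h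
          exact ⟨E', ⟨pr F e, oneSteps_pr hEF e, .prR t s⟩, hE'⟩
  | st E e ih =>
      cases h with
      | mulL h =>
          obtain ⟨E', ⟨F, hEF, s⟩, rfl⟩ := ih h
          exact ⟨st E' e, ⟨st F e, oneSteps_st hEF e, .stL s⟩, rfl⟩
      | mulR ht h =>
          obtain ⟨F, hEF, t⟩ := iTerm_of_term_proj ht
          obtain ⟨E', s, hE'⟩ := exists_sStep_up_of_step h
          exact ⟨E', ⟨up (.star e), (oneSteps_st hEF e).tail (.stOne t), s⟩, hE'⟩

theorem isBisimulation_proj :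
    IsBisimulation (indSExpLTS A) (stexpLTS A) (fun E g => E.proj = g) := by
  refine ⟨⟨up .zero, .zero, rfl⟩, ?_⟩
  rintro E _ rfl
  exact ⟨fun a E' h => ⟨E'.proj, h.step_proj, rfl⟩, fun _ _ => exists_iStep_of_step_proj,
    ⟨ITerm.term_proj, iTerm_of_term_proj⟩⟩

end SExp

section ChartInterpretation

open SExp

variable {A : Type u} {e : StExp A}

theorem mem_sReach_of_oneSteps {E F : SExp A} (hE : E ∈ SReach e)
    (h : ReflTransGen OneStep E F) : F ∈ SReach e :=
  hE.trans (ReflTransGen.mono (fun _ _ s => ⟨none, s⟩) _ _ h)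

theorem SExp.IStep.mem_sReach {E E' : SExp A} {a : A} (hE : E ∈ SReach e)
    (h : IStep E a E') : E' ∈ SReach e :=
  let ⟨_, hEF, s⟩ := h
  (mem_sReach_of_oneSteps hE hEF).tail ⟨some a, s⟩

theorem oneChartInt_oneSteps_iff {E F : SExp A} (hE : E ∈ SReach e) :
    ReflTransGen (fun x y => (oneChartInt e).step x none y) E F ↔ ReflTransGen OneStep E F := by
  refine ⟨ReflTransGen.mono (fun _ _ s => s.2) _ _, fun h => ?_⟩
  induction h with
  | refl => exact .refl
  | tail hEF s ih => exact ih.tail ⟨mem_sReach_of_oneSteps hE hEF, s⟩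

theorem indChart_oneChartInt_step_iff {E E' : SExp A} {a : A} (hE : E ∈ SReach e) :
    (indChart (oneChartInt e)).step E a E' ↔ IStep E a E' := by
  constructor
  · rintro ⟨F, hEF, -, s⟩
    exact ⟨F, (oneChartInt_oneSteps_iff hE).1 hEF, s⟩
  · rintro ⟨F, hEF, s⟩
    exact ⟨F, (oneChartInt_oneSteps_iff hE).2 hEF, mem_sReach_of_oneSteps hE hEF, s⟩

theorem indChart_oneChartInt_term_iff {E : SExp A} (hE : E ∈ SReach e) :
    (indChart (oneChartInt e)).term E ↔ ITerm E := by
  constructor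
  · rintro ⟨F, hEF, -, t⟩
    exact ⟨F, (oneChartInt_oneSteps_iff hE).1 hEF, t⟩
  · rintro ⟨F, hEF, t⟩
    exact ⟨F, (oneChartInt_oneSteps_iff hE).2 hEF, mem_sReach_of_oneSteps hE hEF, t⟩

theorem isChartBisim_proj (e : StExp A) :
    IsChartBisim (indChart (oneChartInt e)) (chartInt e)
      (fun E g => E ∈ SReach e ∧ g ∈ MReach e ∧ E.proj = g) := by
  refine ⟨fun _ _ h => ⟨h.1, h.2.1⟩, ⟨.refl, .refl, proj_flatUp e⟩, ?_⟩
  rintro E _ ⟨hE, hg, rfl⟩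
  obtain ⟨forth, back, hterm⟩ := isBisimulation_proj.2 E _ rfl
  refine ⟨fun a E' h => ?_, fun a g' ⟨_, h⟩ => ?_, ?_⟩
  · rw [indChart_oneChartInt_step_iff hE] at h
    obtain ⟨g', h', rfl⟩ := forth a E' h
    exact ⟨_, ⟨hg, h'⟩, h.mem_sReach hE, hg.tail ⟨a, h'⟩, rfl⟩
  · obtain ⟨E', h', rfl⟩ := back a g' h
    exact ⟨E', (indChart_oneChartInt_step_iff hE).2 h', h'.mem_sReach hE, hg.tail ⟨a, h⟩, rfl⟩
  · rw [indChart_oneChartInt_term_iff hE]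
    exact hterm.trans ⟨fun t => ⟨hg, t⟩, And.right⟩

end ChartInterpretation

/-- For every star expression `e`, the projection function `π`
restricts to a functional bisimulation from the induced chart of the 1-chart
interpretation `C1(e)` to the chart interpretation `C(e)`; in particular
`ind(C1(e))` and `C(e)` are bisimilar. -/
theorem projection_restricts_to_functional_bisimulation {A : Type u} (e : StExp A) :
    IsChartBisim (indChart (oneChartInt e)) (chartInt e)
      (fun F g => F ∈ SReach e ∧ g ∈ MReach e ∧ SExp.proj F = g) ∧
    (∀ (F : SExp A) (g g' : StExp A),
      (F ∈ SReach e ∧ g ∈ MReach e ∧ SExp.proj F = g) →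
      (F ∈ SReach e ∧ g' ∈ MReach e ∧ SExp.proj F = g') → g = g') ∧
    ChartBisimilar (indChart (oneChartInt e)) (chartInt e) :=
  ⟨isChartBisim_proj e, fun _ _ _ h h' => h.2.2.symm.trans h'.2.2, _, isChartBisim_proj e⟩
end

section
/- For every star expression e over an action set A, the entry/body-labeling Ĉ1(e) (the e-generated, e-rooted part of the entry/body-labeled 1-LTS generated by the marked TSS T̲̂^(*)(A)) is a LLEE-witness of the 1-chart interpretation C1(e). -/
universe u v w

/-!
Erasing the marks gives back the unmarked transitions, so only (W1)–(W3) need an argument.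

(W1) holds on all stacked star expressions, by induction on them: a body step out of `f*`
happens only when `f` is not normed⁺, and then the left factor of the resulting `E * f*` never
terminates, so `f*` is not reached again.

In a reachable (hence canonical) expression, a loop-entry step of level `|f| + 1` leaves a vertex
`C[f*]`, with `C` an applicative context, for some `C[E * f*]`; the body steps that follow stay
inside the hole until the left factor terminates and `C[f*]` is revisited. So the induced
subchart consists of `C[f*]` and vertices `C[F * f*]`, which never terminate and whose entry
levels are bounded by the star height of `F`, at most `|f|`. The loop exists because `f` is
normed⁺ and a normed canonical expression terminates after body steps alone: an entry step on a
path to termination is undone by the matching exit `C[E * f*] →1 C[f*]`.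
-/

open SExp Relation

section InfinitePaths

variable {V : Type u} {L : Type v}

theorem exists_isInfPathFrom_of_transGen {C : Chart V L}
    (h : TransGen (fun x y => ∃ l, C.step x l y) C.start C.start) :
    ∃ p, IsInfPathFrom C p := by
  have hsucc : ∀ x : {x // TransGen (fun x y => ∃ l, C.step x l y) x C.start},
      ∃ y : {x // TransGen (fun x y => ∃ l, C.step x l y) x C.start}, ∃ l, C.step x l y := by
    rintro ⟨x, hx⟩
    obtain ⟨y, hxy, hy⟩ := TransGen.head'_iff.1 hx
    rcases reflTransGen_iff_eq_or_transGen.1 hy with rfl | hy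
    · exact ⟨⟨_, h⟩, hxy⟩
    · exact ⟨⟨y, hy⟩, hxy⟩
  choose next hnext using hsucc
  refine ⟨fun i => (next^[i] ⟨C.start, h⟩).1, rfl, fun i => ?_⟩
  simp only [Function.iterate_succ_apply']
  exact hnext _

end InfinitePaths

namespace LLEE

variable {S : Type u} {L : Type v} {step : S → L × ℕ → S → Prop} {term : S → Prop} {v : S}
  {n : ℕ}

theorem loopVerts_mono {step' : S → L × ℕ → S → Prop} (h : ∀ x l y, step x l y → step' x l y) :
    loopVerts step v n ⊆ loopVerts step' v n := by
  rintro t (rfl | ⟨u, ⟨l, hu⟩, hut⟩)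
  · exact Set.mem_insert _ _
  · refine Set.mem_insert_of_mem _ ⟨u, ⟨l, h _ _ _ hu⟩, ReflTransGen.mono ?_ _ _ hut⟩
    rintro x y ⟨⟨l', hxy⟩, hx⟩
    exact ⟨⟨l', h _ _ _ hxy⟩, hx⟩

theorem exists_isInfPathFrom_subchartAt {u : S} (hvu : Entry step n v u)
    (huv : ReflTransGen (fun x y => Body step x y ∧ x ≠ v) u v) :
    ∃ p, IsInfPathFrom (subchartAt step term v n) p := by
  apply exists_isInfPathFrom_of_transGen
  obtain ⟨l, hl⟩ := hvu
  refine TransGen.head' ⟨(l, n), .inl ⟨rfl, rfl, hl⟩⟩ ?_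
  have hpath : ∀ w, ReflTransGen (fun x y => Body step x y ∧ x ≠ v) u w →
      ReflTransGen (fun x y => ∃ l, (subchartAt step term v n).step x l y) u w := by
    intro w huw
    induction huw with
    | refl => rfl
    | tail hux hxy ih =>
      obtain ⟨⟨l', hxy⟩, hx⟩ := hxy
      exact ih.tail ⟨(l', 0), .inr ⟨Set.mem_insert_of_mem _ ⟨u, ⟨l, hl⟩, hux⟩, hx, rfl, hxy⟩⟩
  exact hpath v huv

theorem subchartAt_returns (hbody : ¬ ∃ p : ℕ → S, ∀ i, Body step (p i) (p (i + 1)))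
    {p : ℕ → S} (hp : IsInfPathFrom (subchartAt step term v n) p) : ∃ k, 0 < k ∧ p k = v := by
  by_contra! hne
  refine hbody ⟨fun i => p (i + 1), fun i => ?_⟩
  obtain ⟨⟨l, m⟩, hv | ⟨-, -, hm, hl⟩⟩ := hp.2 (i + 1)
  · exact absurd hv.1 (hne _ i.succ_pos)
  · obtain rfl : m = 0 := hm
    exact ⟨l, hl⟩

end LLEE

namespace AppCtx

variable {A : Type u}

theorem fill_injective (C : AppCtx A) : Function.Injective C.fill := by
  induction C with
  | hole => exact fun _ _ h => h
  | pr _ _ ih | st _ _ ih => intro X Y h; injection h with h; exact ih h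

theorem not_sTerm_fill_st (C : AppCtx A) (F : SExp A) (g : StExp A) :
    ¬ STerm (C.fill (.st F g)) := by
  induction C with
  | hole => rintro ⟨⟩
  | pr _ _ ih => intro h; cases h with | pr h _ => exact ih h
  | st => rintro ⟨⟩

end AppCtx

namespace SExp

variable {A : Type u}

theorem MStep.toSStep {E E' : SExp A} {l : Option A × ℕ} (h : MStep E l E') :
    SStep E l.1 E' := by
  induction h with
  | act => exact .act
  | addL _ ih => exact .addL ih
  | addR _ ih => exact .addR ih
  | upMulL _ ih => exact .upMulL ih
  | upMulR ht _ ih => exact .upMulR ht ih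
  | upStarP _ _ ih => exact .upStar ih
  | upStarN _ _ ih => exact .upStar ih
  | prL _ ih => exact .prL ih
  | prR ht _ ih => exact .prR ht ih
  | stL _ ih => exact .stL ih
  | stOne ht => exact .stOne ht

theorem SStep.exists_mStep {E E' : SExp A} {l : Option A} (h : SStep E l E') :
    ∃ n, MStep E (l, n) E' := by
  induction h with
  | act => exact ⟨0, .act⟩
  | addL _ ih => obtain ⟨_, h⟩ := ih; exact ⟨0, .addL h⟩
  | addR _ ih => obtain ⟨_, h⟩ := ih; exact ⟨0, .addR h⟩
  | upMulL _ ih => obtain ⟨n, h⟩ := ih; exact ⟨n, .upMulL h⟩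
  | upMulR ht _ ih => obtain ⟨_, h⟩ := ih; exact ⟨0, .upMulR ht h⟩
  | @upStar e _ _ _ ih =>
    obtain ⟨_, h⟩ := ih
    by_cases hN : NormedP (up e)
    · exact ⟨_, .upStarP hN h⟩
    · exact ⟨0, .upStarN hN h⟩
  | prL _ ih => obtain ⟨n, h⟩ := ih; exact ⟨n, .prL h⟩
  | prR ht _ ih => obtain ⟨_, h⟩ := ih; exact ⟨0, .prR ht h⟩
  | stL _ ih => obtain ⟨n, h⟩ := ih; exact ⟨n, .stL h⟩
  | stOne ht => exact ⟨0, .stOne ht⟩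

theorem not_oneStep_up {f : StExp A} {E : SExp A} : ¬ OneStep (up f) E := by
  induction f generalizing E with
  | mul _ _ ih _ => intro h; cases h with | upMulL h => exact ih h
  | _ => rintro ⟨⟩

theorem SStep.canonical_of_up {f : StExp A} {l : Option A} {E : SExp A} (h : SStep (up f) l E) :
    Canonical E := by
  induction f generalizing l E with
  | zero | one => cases h
  | act => cases h; trivial
  | add _ _ ih₁ ih₂ => cases h with | addL h => exact ih₁ h | addR h => exact ih₂ h
  | mul _ _ ih₁ ih₂ => cases h with | upMulL h => exact (ih₁ h :) | upMulR _ h => exact ih₂ h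
  | star _ ih => cases h with | upStar h => exact (ih h :)

theorem SStep.canonical {E E' : SExp A} {l : Option A} (h : SStep E l E') (hE : Canonical E) :
    Canonical E' := by
  induction E generalizing E' with
  | up => exact h.canonical_of_up
  | pr _ _ ih => cases h with | prL h => exact (ih h hE :) | prR _ h => exact h.canonical_of_up
  | st _ _ ih => cases h with | stL h => exact (ih h hE :) | stOne _ => trivial

theorem canonical_flatUp : ∀ f : StExp A, Canonical (flatUp f)
  | .mul f _ => canonical_flatUp f
  | .zero | .one | .act _ | .add _ _ | .star _ => trivial

theorem SStep.heightS_le {E E' : SExp A} {l : Option A} (h : SStep E l E') :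
    E'.heightS ≤ E.heightS := by
  induction h <;> simp only [heightS, StExp.height] at * <;> omega

theorem MStep.snd_le_heightS {E E' : SExp A} {l : Option A × ℕ} (h : MStep E l E') :
    l.2 ≤ E.heightS := by
  induction h <;> simp only [heightS, StExp.height] at * <;> omega

theorem heightS_le_of_reflTransGen {E F : SExp A} (h : ReflTransGen AStep E F) :
    F.heightS ≤ E.heightS := by
  induction h with
  | refl => rfl
  | tail _ hFG ih => exact hFG.choose_spec.heightS_le.trans ih

theorem MStep.exists_fill_upStar {E E' : SExp A} {l : Option A × ℕ} (h : MStep E l E')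
    (hE : Canonical E) (hl : 0 < l.2) : ∃ (C : AppCtx A) (f : StExp A), E = C.fill (up f.star) := by
  induction h with
  | upMulL => exact hE.elim
  | upStarP => exact ⟨.hole, _, rfl⟩
  | @prL _ _ g _ _ ih => obtain ⟨C, f, rfl⟩ := ih hE hl; exact ⟨.pr C g, f, rfl⟩
  | @stL _ _ g _ _ ih => obtain ⟨C, f, rfl⟩ := ih hE hl; exact ⟨.st C g, f, rfl⟩
  | _ => exact absurd hl (lt_irrefl 0)

theorem MStep.fill (C : AppCtx A) {X Y : SExp A} {l : Option A × ℕ} (h : MStep X l Y) :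
    MStep (C.fill X) l (C.fill Y) := by
  induction C with
  | hole => exact h
  | pr _ _ ih => exact .prL ih
  | st _ _ ih => exact .stL ih

theorem MStep.cases_fill_st {C : AppCtx A} {F Y : SExp A} {g : StExp A} {l : Option A × ℕ}
    (h : MStep (C.fill (.st F g)) l Y) :
    (∃ F', MStep F l F' ∧ Y = C.fill (.st F' g)) ∨
      (STerm F ∧ l = (none, 0) ∧ Y = C.fill (up g.star)) := by
  induction C generalizing Y with
  | hole =>
    cases h with
    | stL h => exact .inl ⟨_, h, rfl⟩
    | stOne hF => exact .inr ⟨hF, rfl, rfl⟩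
  | pr C _ ih =>
    cases h with
    | prL h =>
      rcases ih h with ⟨F', hF', rfl⟩ | ⟨hF, hl, rfl⟩
      · exact .inl ⟨F', hF', rfl⟩
      · exact .inr ⟨hF, hl, rfl⟩
    | prR hT _ => exact absurd hT (C.not_sTerm_fill_st F g)
  | st C _ ih =>
    cases h with
    | stL h =>
      rcases ih h with ⟨F', hF', rfl⟩ | ⟨hF, hl, rfl⟩
      · exact .inl ⟨F', hF', rfl⟩
      · exact .inr ⟨hF, hl, rfl⟩
    | stOne hT => exact absurd hT (C.not_sTerm_fill_st F g)

theorem MStep.of_fill_upStar {C : AppCtx A} {f : StExp A} {l : Option A} {n : ℕ} {Y : SExp A}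
    (h : MStep (C.fill (up f.star)) (l, n) Y) (hn : 0 < n) :
    n = f.height + 1 ∧ NormedP (up f) ∧ ∃ X, SStep (up f) l X ∧ Y = C.fill (.st X f) := by
  induction C generalizing Y with
  | hole =>
    cases h with
    | upStarP hf hX => exact ⟨rfl, hf, _, hX.toSStep, rfl⟩
    | upStarN => exact absurd hn (lt_irrefl 0)
  | pr _ _ ih =>
    cases h with
    | prL h => obtain ⟨hn, hf, X, hX, rfl⟩ := ih h; exact ⟨hn, hf, X, hX, rfl⟩
    | prR => exact absurd hn (lt_irrefl 0)
  | st _ _ ih =>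
    cases h with
    | stL h => obtain ⟨hn, hf, X, hX, rfl⟩ := ih h; exact ⟨hn, hf, X, hX, rfl⟩
    | stOne => exact absurd hn (lt_irrefl 0)

theorem reflTransGen_aStep_of_iSteps {E F : SExp A}
    (h : ReflTransGen (fun X Y => ∃ a, IStep X a Y) E F) : ReflTransGen AStep E F :=
  ReflTransGen.lift' id (fun _ _ ⟨a, _, hXW, hWY⟩ =>
    (ReflTransGen.mono (fun _ _ h => ⟨none, h⟩) _ _ hXW).tail ⟨some a, hWY⟩) _ _ h

theorem Normed.exists_iSteps_iTerm {E : SExp A} (h : Normed E) :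
    ∃ F, ReflTransGen (fun X Y => ∃ a, IStep X a Y) E F ∧ ITerm F := by
  obtain ⟨T, hET, hT⟩ := h
  induction hET using ReflTransGen.head_induction_on with
  | refl => exact ⟨T, .refl, T, .refl, hT⟩
  | head hEY _ ih =>
    obtain ⟨F, hYF, hF⟩ := ih
    obtain ⟨_ | a, hEY⟩ := hEY
    · rcases hYF.cases_head with rfl | ⟨Z, ⟨a, W, hYW, hWZ⟩, hZF⟩
      · obtain ⟨G, hFG, hG⟩ := hF
        exact ⟨_, .refl, G, .head hEY hFG, hG⟩
      · exact ⟨F, .head ⟨a, W, .head hEY hYW, hWZ⟩ hZF, hF⟩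
    · exact ⟨F, .head ⟨a, _, .refl, hEY⟩ hYF, hF⟩

theorem normedP_up_iff {f : StExp A} :
    NormedP (up f) ↔ ∃ a X, SStep (up f) (some a) X ∧ Normed X := by
  constructor
  · rintro ⟨F, hF, G, hFG, hG⟩
    obtain ⟨Y, ⟨a, Z, hZ, hZY⟩, hYF⟩ := TransGen.head'_iff.1 hF
    rcases hZ.cases_head with rfl | ⟨W, hW, -⟩
    · refine ⟨a, Y, hZY, G, (reflTransGen_aStep_of_iSteps hYF).trans ?_, hG⟩
      exact ReflTransGen.mono (fun _ _ h => ⟨none, h⟩) _ _ hFG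
    · exact (not_oneStep_up hW).elim
  · rintro ⟨a, X, hX, hXn⟩
    obtain ⟨F, hXF, hF⟩ := hXn.exists_iSteps_iTerm
    exact ⟨F, TransGen.head' ⟨a, _, .refl, hX⟩ hXF, hF⟩

theorem acc_pr {E : SExp A} {g : StExp A} (hE : Acc (flip BStep) E)
    (hg : ∀ {l X}, MStep (up g) l X → Acc (flip BStep) X) : Acc (flip BStep) (.pr E g) := by
  induction hE with
  | intro E _ ih =>
    constructor
    rintro Y ⟨l, hY⟩
    cases hY with
    | prL h => exact ih _ ⟨_, h⟩
    | prR _ h => exact hg h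

theorem acc_st {E : SExp A} {g : StExp A} (hE : Acc (flip BStep) E)
    (hg : Normed E → Acc (flip BStep) (up g.star)) : Acc (flip BStep) (.st E g) := by
  induction hE with
  | intro E _ ih =>
    constructor
    rintro Y ⟨l, hY⟩
    cases hY with
    | stL h => exact ih _ ⟨_, h⟩ fun ⟨T, hT, hTt⟩ => hg ⟨T, .head ⟨_, h.toSStep⟩ hT, hTt⟩
    | stOne hE => exact hg ⟨E, .refl, hE⟩

theorem acc_of_mStep_up : ∀ (f : StExp A) {l : Option A × ℕ} {X : SExp A},
    MStep (up f) l X → Acc (flip BStep) X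
  | .zero, _, _, h | .one, _, _, h => nomatch h
  | .act _, _, _, .act => ⟨_, fun _ ⟨_, h⟩ => nomatch h⟩
  | .add f _, _, _, .addL h => acc_of_mStep_up f h
  | .add _ f, _, _, .addR h => acc_of_mStep_up f h
  | .mul f g, _, _, .upMulL h => acc_pr (acc_of_mStep_up f h) (acc_of_mStep_up g)
  | .mul _ g, _, _, .upMulR _ h => acc_of_mStep_up g h
  | .star f, _, _, h => by
    have hstar : Acc (flip BStep) (up f.star) := by
      constructor
      rintro Y ⟨l, hY⟩
      cases hY with
      | upStarN hf hX =>
        exact acc_st (acc_of_mStep_up f hX) fun hXn =>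
          absurd (normedP_up_iff.2 ⟨_, _, hX.toSStep, hXn⟩) hf
    cases h with
    | upStarP _ hX | upStarN _ hX => exact acc_st (acc_of_mStep_up f hX) fun _ => hstar

theorem acc_bStep : ∀ E : SExp A, Acc (flip BStep) E
  | .up f => ⟨_, fun _ ⟨_, h⟩ => acc_of_mStep_up f h⟩
  | .pr E g => acc_pr (acc_bStep E) (acc_of_mStep_up g)
  | .st E g => acc_st (acc_bStep E) fun _ => ⟨_, fun _ ⟨_, h⟩ => acc_of_mStep_up g.star h⟩

def BodyNormed (E : SExp A) : Prop :=
  ∃ F, ReflTransGen BStep E F ∧ STerm F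

theorem bodyNormed_fill_upStar_of_fill_st {C : AppCtx A} {X : SExp A} {f : StExp A}
    (h : BodyNormed (C.fill (.st X f))) : BodyNormed (C.fill (up f.star)) := by
  obtain ⟨T, hXT, hT⟩ := h
  suffices ∀ Y, ReflTransGen BStep Y T → ∀ X, Y = C.fill (.st X f) →
      BodyNormed (C.fill (up f.star)) from this _ hXT X rfl
  intro Y hY
  induction hY using ReflTransGen.head_induction_on with
  | refl => rintro X rfl; exact absurd hT (C.not_sTerm_fill_st X f)
  | head hYZ hZT ih =>
    rintro X rfl
    obtain ⟨l, hYZ⟩ := hYZ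
    rcases hYZ.cases_fill_st with ⟨X', -, rfl⟩ | ⟨-, -, rfl⟩
    · exact ih X' rfl
    · exact ⟨T, hZT, hT⟩

theorem Normed.bodyNormed {E : SExp A} (h : Normed E) (hE : Canonical E) : BodyNormed E := by
  obtain ⟨T, hET, hT⟩ := h
  induction hET using ReflTransGen.head_induction_on with
  | refl => exact ⟨_, .refl, hT⟩
  | head hEY _ ih =>
    obtain ⟨l, hEY⟩ := hEY
    obtain ⟨_ | n, hm⟩ := hEY.exists_mStep
    · obtain ⟨F, hYF, hF⟩ := ih (hEY.canonical hE)
      exact ⟨F, .head ⟨l, hm⟩ hYF, hF⟩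
    · obtain ⟨C, f, rfl⟩ := hm.exists_fill_upStar hE n.succ_pos
      obtain ⟨-, -, X, -, rfl⟩ := hm.of_fill_upStar n.succ_pos
      exact bodyNormed_fill_upStar_of_fill_st (ih (hEY.canonical hE))

theorem mem_loopVerts_fill_upStar {C : AppCtx A} {f : StExp A} {n : ℕ} {t : SExp A} (hn : 0 < n)
    (ht : t ∈ LLEE.loopVerts MStep (C.fill (up f.star)) n) :
    t = C.fill (up f.star) ∨ ∃ F, ReflTransGen AStep (up f) F ∧ t = C.fill (.st F f) := by
  rcases ht with rfl | ⟨u, ⟨l, hu⟩, hut⟩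
  · exact .inl rfl
  obtain ⟨-, -, X, hX, rfl⟩ := hu.of_fill_upStar hn
  induction hut with
  | refl => exact .inr ⟨X, .single ⟨_, hX⟩, rfl⟩
  | tail _ hbc ih =>
    obtain ⟨⟨_, hbc⟩, hb⟩ := hbc
    rcases ih with rfl | ⟨F, hF, rfl⟩
    · exact absurd rfl hb
    rcases hbc.cases_fill_st with ⟨F', hF', rfl⟩ | ⟨-, -, rfl⟩
    · exact .inr ⟨F', hF.tail ⟨_, hF'.toSStep⟩, rfl⟩
    · exact .inl rfl

theorem entry_le_height_of_mem_loopVerts {C : AppCtx A} {f : StExp A} {n m : ℕ} {l : Option A}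
    {t t' : SExp A} (hn : 0 < n) (ht : t ∈ LLEE.loopVerts MStep (C.fill (up f.star)) n)
    (htv : t ≠ C.fill (up f.star)) (hm : 0 < m) (htt' : MStep t (l, m) t') : m ≤ f.height := by
  obtain ⟨F, hF, rfl⟩ := (mem_loopVerts_fill_upStar hn ht).resolve_left htv
  rcases htt'.cases_fill_st with ⟨F', hF', -⟩ | ⟨-, hl, -⟩
  · exact hF'.snd_le_heightS.trans (heightS_le_of_reflTransGen hF)
  · cases hl; exact absurd hm (lt_irrefl 0)

end SExp

section OneChart

variable {A : Type u} {e : StExp A}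

theorem canonical_of_mem_sReach {x : SExp A} (hx : x ∈ SReach e) : Canonical x := by
  induction (hx : ReflTransGen AStep (flatUp e) x) with
  | refl => exact canonical_flatUp e
  | tail _ hyz ih => exact hyz.choose_spec.canonical ih

theorem mem_sReach_of_mStep {x y : SExp A} {l : Option A × ℕ} (hx : x ∈ SReach e)
    (h : MStep x l y) : y ∈ SReach e :=
  ReflTransGen.tail hx ⟨_, h.toSStep⟩

theorem reflTransGen_body_of_mem_sReach {v x y : SExp A} (hx : x ∈ SReach e)
    (h : ReflTransGen (fun x y => BStep x y ∧ x ≠ v) x y) :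
    ReflTransGen (fun x y => LLEE.Body (markedOneChartInt e).step x y ∧ x ≠ v) x y := by
  induction h using ReflTransGen.head_induction_on with
  | refl => rfl
  | head hxz _ ih =>
    obtain ⟨⟨l, hxz⟩, hne⟩ := hxz
    exact .head ⟨⟨l, hx, hxz⟩, hne⟩ (ih (mem_sReach_of_mStep hx hxz))

theorem not_exists_body_path_markedOneChartInt (e : StExp A) :
    ¬ ∃ p : ℕ → SExp A, ∀ i, LLEE.Body (markedOneChartInt e).step (p i) (p (i + 1)) := by
  rintro ⟨p, hp⟩
  refine (wellFounded_iff_isEmpty_descending_chain.1 ⟨acc_bStep⟩).false ⟨p, fun i => ?_⟩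
  obtain ⟨l, -, h⟩ := hp i
  exact ⟨l, h⟩

theorem exists_fill_upStar_of_entry {v : SExp A} {n : ℕ} (hn : 0 < n)
    (hv : ∃ w, LLEE.Entry (markedOneChartInt e).step n v w) :
    ∃ (C : AppCtx A) (f : StExp A), v = C.fill (up f.star) ∧ n = f.height + 1 ∧
      NormedP (up f) ∧ v ∈ SReach e := by
  obtain ⟨w, l, hv, hvw⟩ := hv
  obtain ⟨C, f, rfl⟩ := hvw.exists_fill_upStar (canonical_of_mem_sReach hv) hn
  obtain ⟨rfl, hf, -⟩ := hvw.of_fill_upStar hn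
  exact ⟨C, f, rfl, rfl, hf, hv⟩

theorem exists_isInfPathFrom_subchartAt_fill_upStar {C : AppCtx A} {f : StExp A}
    (hv : C.fill (up f.star) ∈ SReach e) (hf : NormedP (up f)) :
    ∃ p, IsInfPathFrom (LLEE.subchartAt (markedOneChartInt e).step (markedOneChartInt e).term
      (C.fill (up f.star)) (f.height + 1)) p := by
  obtain ⟨a, X, hX, hXn⟩ := normedP_up_iff.1 hf
  obtain ⟨T, hXT, hT⟩ := hXn.bodyNormed hX.canonical_of_up
  obtain ⟨_, hXm⟩ := hX.exists_mStep
  have hentry := (MStep.upStarP hf hXm).fill C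
  have hne : ∀ F, C.fill (.st F f) ≠ C.fill (up f.star) := fun F h => by cases C.fill_injective h
  have hcycle : ReflTransGen (fun x y => BStep x y ∧ x ≠ C.fill (up f.star))
      (C.fill (.st X f)) (C.fill (up f.star)) :=
    (ReflTransGen.lift (fun F => C.fill (.st F f)) (fun _ _ ⟨l, h⟩ => ⟨⟨l, h.stL.fill C⟩, hne _⟩)
      _ _ hXT).tail ⟨⟨none, (MStep.stOne hT).fill C⟩, hne T⟩
  exact LLEE.exists_isInfPathFrom_subchartAt ⟨_, hv, hentry⟩
    (reflTransGen_body_of_mem_sReach (mem_sReach_of_mStep hv hentry) hcycle)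

theorem isLoopChart_subchartAt_markedOneChartInt {v : SExp A} {n : ℕ} (hn : 0 < n)
    (hv : ∃ w, LLEE.Entry (markedOneChartInt e).step n v w) :
    IsLoopChart (LLEE.subchartAt (markedOneChartInt e).step (markedOneChartInt e).term v n) := by
  obtain ⟨C, f, rfl, rfl, hf, hv⟩ := exists_fill_upStar_of_entry hn hv
  refine ⟨exists_isInfPathFrom_subchartAt_fill_upStar hv hf,
    fun _ => LLEE.subchartAt_returns (not_exists_body_path_markedOneChartInt e), ?_⟩
  rintro t ht ⟨-, -, hT⟩
  rcases mem_loopVerts_fill_upStar hn (LLEE.loopVerts_mono (fun _ _ _ h => h.2) ht)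
    with rfl | ⟨F, -, rfl⟩
  · rfl
  · exact absurd hT (C.not_sTerm_fill_st F f)

theorem entry_lt_of_mem_loopVerts_markedOneChartInt {v t t' : SExp A} {n m : ℕ} (hn : 0 < n)
    (hv : ∃ w, LLEE.Entry (markedOneChartInt e).step n v w)
    (ht : t ∈ LLEE.loopVerts (markedOneChartInt e).step v n) (htv : t ≠ v) (hm : 0 < m)
    (htt' : LLEE.Entry (markedOneChartInt e).step m t t') : m < n := by
  obtain ⟨C, f, rfl, rfl, -, -⟩ := exists_fill_upStar_of_entry hn hv
  obtain ⟨_, -, htt'⟩ := htt'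
  exact Nat.lt_succ_of_le <| entry_le_height_of_mem_loopVerts hn
    (LLEE.loopVerts_mono (fun _ _ _ h => h.2) ht) htv hm htt'

end OneChart

/-- For every star expression `e`, the entry/body-labeling
`Ĉ1(e)` is a LLEE-witness of the 1-chart interpretation `C1(e)`. -/
theorem marked_onechart_is_LLEE_witness {A : Type u} (e : StExp A) :
    (∀ (x : SExp A) (l : Option A) (y : SExp A),
      (oneChartInt e).step x l y ↔ ∃ n : ℕ, (markedOneChartInt e).step x (l, n) y) ∧
    LLEE.IsWitness (markedOneChartInt e).step (markedOneChartInt e).term :=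
  ⟨fun _ _ _ => ⟨fun ⟨hx, h⟩ => h.exists_mStep.imp fun _ h => ⟨hx, h⟩,
      fun ⟨_, hx, h⟩ => ⟨hx, h.toSStep⟩⟩,
    not_exists_body_path_markedOneChartInt e,
    fun _ _ hn hv => isLoopChart_subchartAt_markedOneChartInt hn hv,
    fun _ _ hn hv _ ht htv _ _ hm htt' =>
      entry_lt_of_mem_loopVerts_markedOneChartInt hn hv ht htv hm htt'⟩
end

section
/- If a chart has a LLEE-witness, then it satisfies the loop existence and elimination property LEE. -/
universe u v w

/-!
Induction on the number of vertices with loop-entry transitions. By (W3), entry levels strictly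
decrease when descending into loop bodies, so some vertex `v` with entries has loops whose bodies
are entry-free. The entry transitions from `v` that are not also body transitions generate a loop
subchart: (W1) and (W2) yield one that returns to `v` along body transitions, and since vertices
inside the loops of `v` can only take body transitions, (W1) forces every infinite path to return.
Eliminating these transitions and keeping only the body labels of the remaining transitions
from `v` leaves every other induced subchart untouched, hence a LLEE-witness in which `v` has no
entries any more.
-/

open Relation

theorem exists_seq_of_forall_exists_mem {α : Type*} {r : α → α → Prop} {s : Set α}
    (h : ∀ x ∈ s, ∃ y ∈ s, r x y) {a : α} (ha : a ∈ s) :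
    ∃ p : ℕ → α, p 0 = a ∧ ∀ i, r (p i) (p (i + 1)) := by
  choose! f hfs hfr using h
  refine ⟨fun i => f^[i] a, rfl, fun i => ?_⟩
  simpa only [Function.iterate_succ_apply'] using hfr _ (Set.MapsTo.iterate hfs i ha)

theorem Relation.TransGen.exists_seq_of_self {α : Type*} {r : α → α → Prop} {a : α}
    (h : TransGen r a a) : ∃ p : ℕ → α, p 0 = a ∧ ∀ i, r (p i) (p (i + 1)) := by
  obtain ⟨b, hab, hba⟩ := TransGen.head'_iff.mp h
  refine exists_seq_of_forall_exists_mem (s := {x | ReflTransGen r x a}) (fun x hx => ?_)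
    ReflTransGen.refl
  rcases ReflTransGen.cases_head hx with rfl | ⟨y, hxy, hya⟩
  · exact ⟨b, hba, hab⟩
  · exact ⟨y, hya, hxy⟩

namespace LLEE

variable {S : Type u} {L : Type v} {step step' : S → L × ℕ → S → Prop}
  {term term' : S → Prop} {v x y u : S} {n : ℕ}

def HasEntry (step : S → L × ℕ → S → Prop) (x : S) : Prop :=
  ∃ n, 0 < n ∧ ∃ y, Entry step n x y

def IsInnermost (step : S → L × ℕ → S → Prop) (v : S) : Prop :=
  HasEntry step v ∧ ∀ k, 0 < k → ∀ w ∈ loopVerts step v k, w ≠ v → ¬ HasEntry step w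

/-- An entry transition from `v` that is also a body transition may be needed by the loops
of other vertices passing through `v`, so it is not eliminated. -/
def pureEntries (step : S → L × ℕ → S → Prop) (v : S) : Set (S × L × S) :=
  {t | t.1 = v ∧ (∃ k, 0 < k ∧ step v (t.2.1, k) t.2.2) ∧ ¬ step v (t.2.1, 0) t.2.2}

theorem not_mem_pureEntries_of_ne {l : L} (h : x ≠ v) : (x, l, y) ∉ pureEntries step v :=
  fun hU => h hU.1

theorem not_mem_pureEntries_of_body {l : L} (h : step x (l, 0) y) :
    (x, l, y) ∉ pureEntries step v :=
  fun hU => hU.2.2 (hU.1 ▸ h)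

theorem start_mem_loopVerts : v ∈ loopVerts step v n := Set.mem_insert _ _

theorem mem_loopVerts_of_entry (h : Entry step n v u) : u ∈ loopVerts step v n :=
  Set.mem_insert_of_mem _ ⟨u, h, ReflTransGen.refl⟩

theorem mem_loopVerts_of_body (hx : x ∈ loopVerts step v n) (hxv : x ≠ v)
    (h : Body step x y) : y ∈ loopVerts step v n := by
  rcases hx with rfl | ⟨u, hu, hr⟩
  · exact absurd rfl hxv
  · exact Set.mem_insert_of_mem _ ⟨u, hu, hr.tail ⟨h, hxv⟩⟩

theorem exists_entry_of_mem_loopVerts (hx : x ∈ loopVerts step v n) (hxv : x ≠ v) :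
    ∃ u, Entry step n v u := by
  rcases hx with rfl | ⟨u, hu, -⟩
  · exact absurd rfl hxv
  · exact ⟨u, hu⟩

theorem loopVerts_subset {T : Set S} (hv : v ∈ T) (hentry : ∀ u, Entry step n v u → u ∈ T)
    (hbody : ∀ x ∈ loopVerts step v n, x ∈ T → x ≠ v → ∀ y, Body step x y → y ∈ T) :
    loopVerts step v n ⊆ T := by
  rintro w (rfl | ⟨u, hu, hr⟩)
  · exact hv
  induction hr with
  | refl => exact hentry u hu
  | tail hr' hxy ih => exact hbody _ (Set.mem_insert_of_mem _ ⟨u, hu, hr'⟩) ih hxy.2 _ hxy.1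

theorem loopVerts_congr (hentry : ∀ l y, step' v (l, n) y ↔ step v (l, n) y)
    (hbody : ∀ x ∈ loopVerts step v n, ∀ l y, step' x (l, 0) y ↔ step x (l, 0) y) :
    loopVerts step' v n = loopVerts step v n := by
  apply subset_antisymm
  · refine loopVerts_subset start_mem_loopVerts
      (fun u ⟨l, h⟩ => mem_loopVerts_of_entry ⟨l, (hentry l u).1 h⟩) ?_
    rintro x - hx hxv y ⟨l, h⟩
    exact mem_loopVerts_of_body hx hxv ⟨l, (hbody x hx l y).1 h⟩
  · refine loopVerts_subset start_mem_loopVerts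
      (fun u ⟨l, h⟩ => mem_loopVerts_of_entry ⟨l, (hentry l u).2 h⟩) ?_
    rintro x hx hx' hxv y ⟨l, h⟩
    exact mem_loopVerts_of_body hx' hxv ⟨l, (hbody x hx l y).2 h⟩

theorem subchartAt_congr (hentry : ∀ l y, step' v (l, n) y ↔ step v (l, n) y)
    (hbody : ∀ x ∈ loopVerts step v n, ∀ l y, step' x (l, 0) y ↔ step x (l, 0) y)
    (hterm : ∀ x ∈ loopVerts step v n, term' x ↔ term x) :
    subchartAt step' term' v n = subchartAt step term v n := by
  have hverts := loopVerts_congr hentry hbody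
  simp only [subchartAt, hverts, Chart.mk.injEq, true_and]
  constructor
  · ext x ⟨l, k⟩ y
    constructor
    · rintro (⟨rfl, rfl, h⟩ | ⟨hx, hxv, rfl, h⟩)
      · exact Or.inl ⟨rfl, rfl, (hentry l y).1 h⟩
      · exact Or.inr ⟨hx, hxv, rfl, (hbody x hx l y).1 h⟩
    · rintro (⟨rfl, rfl, h⟩ | ⟨hx, hxv, rfl, h⟩)
      · exact Or.inl ⟨rfl, rfl, (hentry l y).2 h⟩
      · exact Or.inr ⟨hx, hxv, rfl, (hbody x hx l y).2 h⟩
  · ext x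
    exact and_congr_right (hterm x)

theorem IsWitness.of_le (hwit : IsWitness step term)
    (hle : ∀ x p y, step' x p y → step x p y)
    (hsub : ∀ w n, 0 < n → (∃ u, Entry step' n w u) →
      subchartAt step' term' w n = subchartAt step term w n) :
    IsWitness step' term' := by
  have hentry {w : S} {n : ℕ} (h : ∃ u, Entry step' n w u) : ∃ u, Entry step n w u :=
    h.imp fun _ => Exists.imp fun _ => hle _ _ _
  refine ⟨fun ⟨p, hp⟩ => hwit.1 ⟨p, fun i => (hp i).imp fun l => hle _ _ _⟩, ?_, ?_⟩
  · intro w n hn hw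
    rw [hsub w n hn hw]
    exact hwit.2.1 w n hn (hentry hw)
  · intro w n hn hw t ht htw m t' hm ht'
    have hverts : loopVerts step' w n = loopVerts step w n :=
      congrArg Chart.verts (hsub w n hn hw)
    exact hwit.2.2 w n hn (hentry hw) t (hverts ▸ ht) htw m t' hm (ht'.imp fun l => hle _ _ _)

theorem IsWitness.not_transGen_body_self (hwit : IsWitness step term) :
    ¬ TransGen (Body step) x x :=
  fun h => hwit.1 (h.exists_seq_of_self.imp fun _ hp => hp.2)

/-- Follow an infinite path of the loop chart up to its first return to `v`. -/
theorem IsLoopChart.exists_entry_reflTransGen_body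
    (h : IsLoopChart (subchartAt step term v n)) :
    ∃ l u, step v (l, n) u ∧ ReflTransGen (Body step) u v := by
  classical
  obtain ⟨⟨p, hp0, hp⟩, hret, -⟩ := h
  replace hp0 : p 0 = v := hp0
  have hk : ∃ k, 0 < k ∧ p k = v := hret p ⟨hp0, hp⟩
  obtain ⟨hk0, hkv⟩ := Nat.find_spec hk
  have hbody : ∀ i ∈ Set.Ico 1 (Nat.find hk), Body step (p i) (p (i + 1)) := by
    intro i hi
    have hiv : p i ≠ v := fun h => Nat.find_min hk hi.2 ⟨hi.1, h⟩
    obtain ⟨⟨l, m⟩, ⟨hx, -⟩ | ⟨-, -, hm, h⟩⟩ := hp i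
    · exact absurd hx hiv
    · obtain rfl : m = 0 := hm
      exact ⟨l, h⟩
  obtain ⟨⟨l, m⟩, ⟨-, hm, h0⟩ | ⟨-, hne, -⟩⟩ := hp 0
  · obtain rfl : m = n := hm
    exact ⟨l, p 1, hp0 ▸ h0, hkv ▸ ReflTransGen.lift p (fun _ _ h => h) _ _
      (reflTransGen_of_succ_of_le (fun i j => Body step (p i) (p j)) hbody hk0)⟩
  · exact absurd hp0 hne

theorem IsWitness.exists_pureEntries_reflTransGen_body (hwit : IsWitness step term)
    (hv : HasEntry step v) :
    ∃ l u, (v, l, u) ∈ pureEntries step v ∧ ReflTransGen (Body step) u v := by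
  obtain ⟨n, hn, hentry⟩ := hv
  obtain ⟨l, u, hvu, huv⟩ :=
    IsLoopChart.exists_entry_reflTransGen_body (hwit.2.1 v n hn hentry)
  exact ⟨l, u, ⟨rfl, ⟨n, hn, hvu⟩,
    fun h0 => hwit.not_transGen_body_self (TransGen.head' ⟨l, h0⟩ huv)⟩, huv⟩

/-- Descend along (W3): a vertex inside a loop of level `k` only has entries of level `< k`. -/
theorem IsWitness.exists_isInnermost (hwit : IsWitness step term)
    (h : ∃ x, HasEntry step x) : ∃ v, IsInnermost step v := by
  by_contra! hnone
  have descend : ∀ x, HasEntry step x → ∃ k, 0 < k ∧ (∃ u, Entry step k x u) ∧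
      ∃ w, HasEntry step w ∧ ∀ m, 0 < m → (∃ y, Entry step m w y) → m < k := by
    intro x hx
    obtain ⟨k, hk, w, hw, hwx, hwE⟩ :
        ∃ k, 0 < k ∧ ∃ w ∈ loopVerts step x k, w ≠ x ∧ HasEntry step w := by
      simpa [IsInnermost, hx] using hnone x
    have hxk := exists_entry_of_mem_loopVerts hw hwx
    exact ⟨k, hk, hxk, w, hwE, fun m hm ⟨y, hy⟩ => hwit.2.2 x k hk hxk w hw hwx m y hm hy⟩
  have bounded : ∀ k x, HasEntry step x →
      (∀ m, 0 < m → (∃ y, Entry step m x y) → m < k) → False := by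
    intro k
    induction k using Nat.strong_induction_on with
    | _ k ih =>
      intro x hx hbound
      obtain ⟨k', hk', hxk', w, hw, hwb⟩ := descend x hx
      exact ih k' (hbound k' hk' hxk') w hw hwb
  obtain ⟨x, hx⟩ := h
  obtain ⟨k, -, -, w, hw, hwb⟩ := descend x hx
  exact bounded k w hw hwb

end LLEE

def Chart.IsLabeling {V : Type u} {L : Type v} (C : Chart V L)
    (mstep : V → L × ℕ → V → Prop) : Prop :=
  ∀ x l y, C.step x l y ↔ ∃ n : ℕ, mstep x (l, n) y

namespace LEE

open LLEE

variable {V : Type u} {L : Type v} {C : Chart V L} {mstep : V → L × ℕ → V → Prop}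
  {U : Set (V × L × V)} {v x y : V} {l : L}

def elimReach (C : Chart V L) (U : Set (V × L × V)) : Set V :=
  {w | ReflTransGen (fun x y => ∃ l, C.step x l y ∧ (x, l, y) ∉ U) C.start w}

theorem mem_elimReach_of_step (hx : x ∈ elimReach C U) (h : C.step x l y)
    (hU : (x, l, y) ∉ U) : y ∈ elimReach C U :=
  ReflTransGen.tail hx ⟨l, h, hU⟩

theorem elim_verts_finite (hfin : C.verts.Finite) : (elim C U).verts.Finite :=
  hfin.subset Set.inter_subset_left

theorem elim_step_mem (hstep : ∀ x l y, C.step x l y → x ∈ C.verts ∧ y ∈ C.verts) :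
    ∀ x l y, (elim C U).step x l y → x ∈ (elim C U).verts ∧ y ∈ (elim C U).verts :=
  fun x l y ⟨⟨h, _⟩, hx, hy⟩ => ⟨⟨(hstep x l y h).1, hx⟩, ⟨(hstep x l y h).2, hy⟩⟩

theorem mem_genVerts_of_mem (h : (v, l, y) ∈ U) : y ∈ genVerts C v U :=
  Set.mem_insert_of_mem _ ⟨y, ⟨l, h⟩, ReflTransGen.refl⟩

theorem mem_genVerts_of_step (hx : x ∈ genVerts C v U) (hxv : x ≠ v) (h : C.step x l y) :
    y ∈ genVerts C v U := by
  rcases hx with rfl | ⟨u, hu, hr⟩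
  · exact absurd rfl hxv
  · exact Set.mem_insert_of_mem _ ⟨u, hu, hr.tail ⟨⟨l, h⟩, hxv⟩⟩

theorem body_of_step_of_not_hasEntry (hlab : C.IsLabeling mstep) (h : C.step x l y)
    (hx : ¬ HasEntry mstep x) : Body mstep x y := by
  obtain ⟨n, hn⟩ := (hlab x l y).1 h
  rcases Nat.eq_zero_or_pos n with rfl | hpos
  · exact ⟨l, hn⟩
  · exact absurd ⟨n, hpos, y, l, hn⟩ hx

theorem finite_setOf_hasEntry (hlab : C.IsLabeling mstep) (hfin : C.verts.Finite)
    (hstep : ∀ x l y, C.step x l y → x ∈ C.verts ∧ y ∈ C.verts) :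
    {x | HasEntry mstep x}.Finite :=
  hfin.subset fun _ ⟨n, _, y, l, h⟩ => (hstep _ l y ((hlab _ l y).2 ⟨n, h⟩)).1

theorem not_hasInfPath_of_forall_not_hasEntry (hlab : C.IsLabeling mstep)
    (hW1 : ¬ ∃ p : ℕ → V, ∀ i, Body mstep (p i) (p (i + 1)))
    (hno : ∀ x, ¬ HasEntry mstep x) : ¬ HasInfPath C := fun ⟨p, _, hp⟩ =>
  hW1 ⟨p, fun i => (hp i).elim fun _ h => body_of_step_of_not_hasEntry hlab h (hno _)⟩

theorem genVerts_pureEntries_subset (hlab : C.IsLabeling mstep)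
    (hv : IsInnermost mstep v) :
    ∀ w ∈ genVerts C v (pureEntries mstep v), ∃ k, 0 < k ∧ w ∈ loopVerts mstep v k := by
  rintro w (rfl | ⟨u, ⟨l, -, ⟨k, hk, hu⟩, -⟩, hr⟩)
  · obtain ⟨k, hk, -⟩ := hv.1
    exact ⟨k, hk, start_mem_loopVerts⟩
  refine ⟨k, hk, ?_⟩
  induction hr with
  | refl => exact mem_loopVerts_of_entry ⟨l, hu⟩
  | tail _ hbc ih =>
    obtain ⟨⟨l', hstep⟩, hbv⟩ := hbc
    exact mem_loopVerts_of_body ih hbv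
      (body_of_step_of_not_hasEntry hlab hstep (hv.2 k hk _ ih hbv))

theorem reflTransGen_genSubchart_of_body {w : V} (hlab : C.IsLabeling mstep)
    (hw : w ∈ genVerts C v U) (h : ReflTransGen (Body mstep) w v) :
    ReflTransGen (fun a b => ∃ l, (genSubchart C v U).step a l b) w v := by
  induction h using ReflTransGen.head_induction_on with
  | refl => exact .refl
  | @head a b hab _ ih =>
    by_cases hav : a = v
    · exact hav ▸ .refl
    obtain ⟨l, h⟩ := hab
    have hC := (hlab a l b).2 ⟨0, h⟩
    exact .head ⟨l, Or.inr ⟨hw, hav, hC⟩⟩ (ih (mem_genVerts_of_step hw hav hC))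

theorem isLoopSubchart_pureEntries (hlab : C.IsLabeling mstep)
    (hstep : ∀ x l y, C.step x l y → x ∈ C.verts ∧ y ∈ C.verts)
    (hwit : IsWitness mstep C.term) (hv : IsInnermost mstep v) :
    IsLoopSubchart C v (pureEntries mstep v) := by
  have hinner : ∀ w ∈ genVerts C v (pureEntries mstep v), w ≠ v →
      ∃ k, 0 < k ∧ w ∈ loopVerts mstep v k ∧ ¬ HasEntry mstep w :=
    fun w hw hwv => (genVerts_pureEntries_subset hlab hv w hw).imp
      fun k ⟨hk, hwk⟩ => ⟨hk, hwk, hv.2 k hk w hwk hwv⟩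
  obtain ⟨l₀, u₀, hU₀, hret⟩ := hwit.exists_pureEntries_reflTransGen_body hv.1
  obtain ⟨k₀, -, h₀⟩ := hU₀.2.1
  refine ⟨(hstep v l₀ u₀ ((hlab v l₀ u₀).2 ⟨k₀, h₀⟩)).1, ⟨_, hU₀⟩,
    fun t ⟨ht, ⟨k, _, h⟩, _⟩ => ⟨ht, ht ▸ (hlab _ _ _).2 ⟨k, h⟩⟩, ?_, ?_, ?_⟩
  · obtain ⟨p, hp0, hp⟩ := TransGen.exists_seq_of_self <| TransGen.head' ⟨l₀, Or.inl ⟨rfl, hU₀⟩⟩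
      (reflTransGen_genSubchart_of_body hlab (mem_genVerts_of_mem hU₀) hret)
    exact ⟨p, hp0, hp⟩
  · rintro p ⟨hp0, hp⟩
    by_contra! hno
    refine hwit.1 ⟨fun i => p (i + 1), fun i => ?_⟩
    obtain ⟨l, ⟨hx, -⟩ | ⟨hG, hxv, hC⟩⟩ := hp (i + 1)
    · exact absurd hx (hno _ i.succ_pos)
    · obtain ⟨-, -, -, hnoE⟩ := hinner _ hG hxv
      exact body_of_step_of_not_hasEntry hlab hC hnoE
  · rintro t htG ⟨-, ht⟩
    by_contra htv
    obtain ⟨k, hk, htk, -⟩ := hinner t htG htv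
    exact htv ((hwit.2.1 v k hk (exists_entry_of_mem_loopVerts htk htv)).2.2 t htk ⟨htk, ht⟩)

def elimLabeling (C : Chart V L) (mstep : V → L × ℕ → V → Prop) (v : V) :
    V → L × ℕ → V → Prop :=
  fun x p y => mstep x p y ∧ (x = v → p.2 = 0) ∧ (elim C (pureEntries mstep v)).step x p.1 y

theorem elimLabeling_iff {k : ℕ} (hlab : C.IsLabeling mstep)
    (hx : x ∈ elimReach C (pureEntries mstep v)) (hxv : x = v → k = 0) :
    elimLabeling C mstep v x (l, k) y ↔ mstep x (l, k) y := by
  refine ⟨And.left, fun h => ⟨h, hxv, ?_⟩⟩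
  have hC := (hlab x l y).2 ⟨k, h⟩
  have hU : (x, l, y) ∉ pureEntries mstep v := by
    by_cases hxv' : x = v
    · exact not_mem_pureEntries_of_body (hxv hxv' ▸ h)
    · exact not_mem_pureEntries_of_ne hxv'
  exact ⟨⟨hC, hU⟩, hx, mem_elimReach_of_step hx hC hU⟩

theorem elim_step_iff_elimLabeling (hlab : C.IsLabeling mstep) :
    (elim C (pureEntries mstep v)).step x l y ↔ ∃ n, elimLabeling C mstep v x (l, n) y := by
  refine ⟨fun h => ?_, fun ⟨_, _, _, h⟩ => h⟩
  obtain ⟨⟨hC, hU⟩, hx, -⟩ := h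
  obtain ⟨n, hn⟩ := (hlab x l y).1 hC
  by_cases h0 : mstep x (l, 0) y
  · exact ⟨0, (elimLabeling_iff hlab hx fun _ => rfl).2 h0⟩
  · refine ⟨n, (elimLabeling_iff hlab hx fun hxv => ?_).2 hn⟩
    by_contra hn0
    exact hU ⟨hxv, ⟨n, Nat.pos_of_ne_zero hn0, hxv ▸ hn⟩, hxv ▸ h0⟩

theorem loopVerts_subset_elimReach {w : V} {n : ℕ} (hlab : C.IsLabeling mstep)
    (hw : w ∈ elimReach C (pureEntries mstep v)) (hwv : w ≠ v) :
    loopVerts mstep w n ⊆ elimReach C (pureEntries mstep v) := by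
  refine loopVerts_subset hw (fun u ⟨l, h⟩ =>
    mem_elimReach_of_step hw ((hlab w l u).2 ⟨n, h⟩) (not_mem_pureEntries_of_ne hwv)) ?_
  rintro x - hx - y ⟨l, h⟩
  exact mem_elimReach_of_step hx ((hlab x l y).2 ⟨0, h⟩) (not_mem_pureEntries_of_body h)

theorem isWitness_elimLabeling (hlab : C.IsLabeling mstep) (hwit : IsWitness mstep C.term) :
    IsWitness (elimLabeling C mstep v) (elim C (pureEntries mstep v)).term := by
  refine hwit.of_le (fun _ _ _ h => h.1) ?_
  rintro w n hn ⟨u, l, -, hwn, -, hw, -⟩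
  have hwv : w ≠ v := fun h => hn.ne' (hwn h)
  have hsub := loopVerts_subset_elimReach (n := n) hlab hw hwv
  exact subchartAt_congr (fun l y => elimLabeling_iff hlab hw fun h => absurd h hwv)
    (fun x hx l y => elimLabeling_iff hlab (hsub hx) fun _ => rfl)
    (fun x hx => and_iff_left (hsub hx))

theorem setOf_hasEntry_elimLabeling_ssubset (hv : HasEntry mstep v) :
    {x | HasEntry (elimLabeling C mstep v) x} ⊂ {x | HasEntry mstep x} := by
  refine Set.ssubset_of_subset_of_ssubset (s₂ := {x | HasEntry mstep x} \ {v}) ?_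
    (Set.sdiff_singleton_ssubset.2 hv)
  rintro x ⟨n, hn, y, l, h, hxn, -⟩
  exact ⟨⟨n, hn, y, l, h⟩, fun hxv => hn.ne' (hxn hxv)⟩

end LEE

open LLEE LEE

theorem LLEE_witness_implies_LEE_general {V : Type u} {L : Type v} (C : Chart V L)
    (hfin : C.verts.Finite)
    (hstep : ∀ x l y, C.step x l y → x ∈ C.verts ∧ y ∈ C.verts)
    (mstep : V → L × ℕ → V → Prop)
    (hlabeling : ∀ x l y, C.step x l y ↔ ∃ n : ℕ, mstep x (l, n) y)
    (hwitness : LLEE.IsWitness mstep C.term) :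
    LEE.SatisfiesLEE C := by
  induction hN : {x | HasEntry mstep x}.ncard using Nat.strong_induction_on
    generalizing C mstep with
  | _ N ih =>
  by_cases hE : ∃ x, HasEntry mstep x
  · obtain ⟨v, hv⟩ := hwitness.exists_isInnermost hE
    have hlt : {x | HasEntry (elimLabeling C mstep v) x}.ncard < N :=
      hN ▸ Set.ncard_lt_ncard (setOf_hasEntry_elimLabeling_ssubset hv.1)
        (finite_setOf_hasEntry hlabeling hfin hstep)
    obtain ⟨C', hC', hinf⟩ := ih _ hlt _ (elim_verts_finite hfin) (elim_step_mem hstep) _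
      (fun _ _ _ => elim_step_iff_elimLabeling hlabeling)
      (isWitness_elimLabeling hlabeling hwitness) rfl
    exact ⟨C', .head ⟨v, _, isLoopSubchart_pureEntries hlabeling hstep hwitness hv, rfl⟩ hC',
      hinf⟩
  · exact ⟨C, .refl,
      not_hasInfPath_of_forall_not_hasEntry hlabeling hwitness.1 (not_exists.mp hE)⟩

/-- If a (finite) chart has a LLEE-witness, then it satisfies the
loop existence and elimination property LEE. -/
theorem LLEE_witness_implies_LEE {V : Type u} {L : Type v} (C : Chart V L)
    (hfin : C.verts.Finite)
    (hstart : C.start ∈ C.verts)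
    (hstep : ∀ x l y, C.step x l y → x ∈ C.verts ∧ y ∈ C.verts)
    (hterm : ∀ x, C.term x → x ∈ C.verts)
    (mstep : V → L × ℕ → V → Prop)
    (hlabeling : ∀ x l y, C.step x l y ↔ ∃ n : ℕ, mstep x (l, n) y)
    (hwitness : LLEE.IsWitness mstep C.term) :
    LEE.SatisfiesLEE C :=
  LLEE_witness_implies_LEE_general C hfin hstep mstep hlabeling hwitness
end
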